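/- arXiv:2403.09149 — 2 statements merged into one kernel-verified Lean document; each statement's English description precedes it below -/
import Mathlib

section
/- Let (A, m) be a Noetherian local ring and F a minimal complex of finitely generated free A-modules. Suppose there is an isomorphism φ : F[-2] → F in the homotopy category K(proj A). Then there exists a minimal 2-periodic complex X of finitely generated free A-modules and an isomorphism of complexes f : X → F (an isomorphism already in C(proj A)). -/
open CategoryTheory Limits IsLocalRing

/-- A (possibly unbounded) cochain complex over a local ring is minimal if each
differential maps into `𝔪` times the target. -/
def MinimalZ (A : Type) [CommRing A] [IsLocalRing A]
    (X : CochainComplex (ModuleCat A) ℤ) : Prop :=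
  ∀ (i j : ℤ) (x : X.X i), X.d i j x ∈ (maximalIdeal A) • (⊤ : Submodule A (X.X j))

/-- A cochain complex is 2-periodic if its terms and differentials repeat with period 2. -/
def Periodic2Z (A : Type) [CommRing A] (X : CochainComplex (ModuleCat A) ℤ) : Prop :=
  ∀ n : ℤ, X.X (n + 2) = X.X n ∧ HEq (X.d (n + 2) (n + 3)) (X.d n (n + 1))

/-!
A homotopy equivalence `f : K ⟶ L`, `g : L ⟶ K` between minimal complexes of finitely generated
modules over a local ring is an isomorphism: `g ≫ f - 𝟙 = d h + h d` maps into `𝔪 L`, so by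
Nakayama each component of `g ≫ f` is surjective, hence bijective (a surjective endomorphism of a
finitely generated module is injective), and the same holds for `f ≫ g`. Applied to `F[-2] ≃ F`,
this gives isomorphisms `F^n ≅ F^(n+2)` commuting with the differentials; conjugating the
differentials of `F` by their composites `F^(n mod 2) ≅ F^n` yields a 2-periodic complex
isomorphic to `F`.
-/

theorem LinearMap.bijective_of_sub_mem_smul_top {R M : Type*} [CommRing R] [AddCommGroup M]
    [Module R M] [Module.Finite R M] {I : Ideal R} (hI : I ≤ Ideal.jacobson ⊥)
    (u : M →ₗ[R] M) (hu : ∀ x, u x - x ∈ I • (⊤ : Submodule R M)) :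
    Function.Bijective u := by
  refine OrzechProperty.bijective_of_surjective_endomorphism u (LinearMap.range_eq_top.mp ?_)
  refine top_le_iff.mp (Submodule.le_of_le_smul_of_le_jacobson_bot Module.Finite.fg_top hI ?_)
  intro x _
  rw [← sub_sub_cancel (u x) x]
  exact Submodule.sub_mem _ (Submodule.mem_sup_left ⟨x, rfl⟩) (Submodule.mem_sup_right (hu x))

section Minimal

variable {R : Type*} [CommRing R] {I : Ideal R} {ι : Type*} {c : ComplexShape ι}
  {K L : HomologicalComplex (ModuleCat R) c}

theorem Homotopy.f_apply_sub_mem_smul_top {f g : K ⟶ L} (h : Homotopy f g)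
    (hK : ∀ i j (x : K.X i), K.d i j x ∈ I • (⊤ : Submodule R (K.X j)))
    (hL : ∀ i j (x : L.X i), L.d i j x ∈ I • (⊤ : Submodule R (L.X j))) (i : ι) (x : K.X i) :
    f.f i x - g.f i x ∈ I • (⊤ : Submodule R (L.X i)) := by
  rw [h.comm i, dNext, prevD]
  simp only [AddMonoidHom.mk'_apply, ModuleCat.hom_add, ModuleCat.hom_comp, LinearMap.add_apply,
    LinearMap.coe_comp, Function.comp_apply, add_sub_cancel_right]
  exact add_mem (Submodule.smul_top_le_comap_smul_top I (h.hom _ i).hom (hK _ _ x)) (hL _ _ _)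

theorem HomotopyEquiv.isIso_hom_of_d_mem_smul_top (hI : I ≤ Ideal.jacobson ⊥)
    [∀ i, Module.Finite R (K.X i)] [∀ i, Module.Finite R (L.X i)] (e : HomotopyEquiv K L)
    (hK : ∀ i j (x : K.X i), K.d i j x ∈ I • (⊤ : Submodule R (K.X j)))
    (hL : ∀ i j (x : L.X i), L.d i j x ∈ I • (⊤ : Submodule R (L.X j))) :
    IsIso e.hom := by
  have hKK (i : ι) : Function.Bijective (e.inv.f i ∘ e.hom.f i) := by
    simpa using ((e.hom ≫ e.inv).f i).hom.bijective_of_sub_mem_smul_top hI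
      (e.homotopyHomInvId.f_apply_sub_mem_smul_top hK hK i)
  have hLL (i : ι) : Function.Bijective (e.hom.f i ∘ e.inv.f i) := by
    simpa using ((e.inv ≫ e.hom).f i).hom.bijective_of_sub_mem_smul_top hI
      (e.homotopyInvHomId.f_apply_sub_mem_smul_top hL hL i)
  have (i : ι) : IsIso (e.hom.f i) := (ConcreteCategory.isIso_iff_bijective _).mpr
    ⟨(hKK i).injective.of_comp, (hLL i).surjective.of_comp⟩
  exact HomologicalComplex.Hom.isIso_of_components _

end Minimal

section EmodTwo

variable {C : Type*} [Category C] (Y : ℤ → C) (s : ∀ n, Y n ≅ Y (n + 2))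

def emodTwoIso (n : ℤ) : Y (n % 2) ≅ Y n :=
  if h : 0 ≤ n ∧ n < 2 then eqToIso (congrArg Y (Int.emod_eq_of_lt h.1 h.2))
  else if 2 ≤ n then
    eqToIso (congrArg Y (by omega)) ≪≫ emodTwoIso (n - 2) ≪≫ s (n - 2) ≪≫
      eqToIso (congrArg Y (by omega))
  else eqToIso (congrArg Y (by omega)) ≪≫ emodTwoIso (n + 2) ≪≫ (s n).symm
termination_by (2 * n - 1).natAbs
decreasing_by all_goals omega

theorem emodTwoIso_eq_of_eq_add_two {m n : ℤ} (h : m = n + 2) :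
    emodTwoIso Y s m = eqToIso (congrArg Y (by omega)) ≪≫ emodTwoIso Y s n ≪≫ s n ≪≫
      eqToIso (congrArg Y h.symm) := by
  by_cases hn : 0 ≤ n
  · rw [emodTwoIso.eq_def Y s m, dif_neg (by omega), if_pos (by omega)]
    obtain rfl : n = m - 2 := by omega
    rfl
  · rw [emodTwoIso.eq_def Y s n, dif_neg (by omega), if_neg (by omega)]
    subst h
    ext
    simp

end EmodTwo

namespace HomologicalComplex

universe v

variable {V : Type*} [Category.{v} V] [HasZeroMorphisms V] {ι : Type*} {c : ComplexShape ι}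
  (K : HomologicalComplex V c) (Y : ι → V) (e : ∀ i, Y i ≅ K.X i)

-- An `abbrev`, so that `(K.transport Y e).X i` is reducibly `Y i` and `simp` can see through it.
abbrev transport : HomologicalComplex V c where
  X := Y
  d i j := (e i).hom ≫ K.d i j ≫ (e j).inv
  shape i j h := by simp [K.shape i j h]

def transportIso : K.transport Y e ≅ K :=
  Hom.isoOfComponents e (fun i j _ ↦ by simp)

end HomologicalComplex

theorem MinimalZ.transport {A : Type} [CommRing A] [IsLocalRing A]
    {K : CochainComplex (ModuleCat A) ℤ} (hK : MinimalZ A K) (Y : ℤ → ModuleCat A)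
    (e : ∀ i, Y i ≅ K.X i) : MinimalZ A (K.transport Y e) := fun i j x ↦
  Submodule.smul_top_le_comap_smul_top _ (e j).inv.hom (hK i j ((e i).hom x))

theorem MinimalZ.shift {A : Type} [CommRing A] [IsLocalRing A]
    {K : CochainComplex (ModuleCat A) ℤ} (hK : MinimalZ A K) (n : ℤ) : MinimalZ A (K⟦n⟧) :=
  fun i j x ↦ Submodule.smul_of_tower_mem _ (n.negOnePow : ℤ) (hK (i + n) (j + n) x)

namespace CochainComplex

variable {V : Type*} [Category V] [HasZeroMorphisms V] (K : CochainComplex V ℤ)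
  (s : ∀ n, K.X n ≅ K.X (n + 2))

def periodize : CochainComplex V ℤ :=
  K.transport (fun n ↦ K.X (n % 2)) (emodTwoIso K.X s)

def periodizeIso : K.periodize s ≅ K :=
  K.transportIso _ _

theorem periodize_X_add_two (n : ℤ) : (K.periodize s).X (n + 2) = (K.periodize s).X n :=
  congrArg K.X (by omega)

theorem periodize_d_heq (hs : ∀ i j, (s i).hom ≫ K.d (i + 2) (j + 2) = K.d i j ≫ (s j).hom)
    (i j : ℤ) : (K.periodize s).d (i + 2) (j + 2) ≍ (K.periodize s).d i j := by
  rw [← conj_eqToHom_iff_heq _ _ (K.periodize_X_add_two s i) (K.periodize_X_add_two s j)]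
  simp [periodize, emodTwoIso_eq_of_eq_add_two K.X s (rfl : i + 2 = i + 2),
    emodTwoIso_eq_of_eq_add_two K.X s (rfl : j + 2 = j + 2), reassoc_of% hs]

end CochainComplex

theorem stmt_10_general (A : Type) [CommRing A] [IsLocalRing A]
    (F : CochainComplex (ModuleCat A) ℤ)
    (hfree : ∀ i, Module.Free A (F.X i) ∧ Module.Finite A (F.X i))
    (hmin : MinimalZ A F)
    (hiso : Nonempty
      (((HomotopyCategory.quotient (ModuleCat A) (ComplexShape.up ℤ)).obj (F⟦(-2 : ℤ)⟧)) ≅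
        (HomotopyCategory.quotient (ModuleCat A) (ComplexShape.up ℤ)).obj F)) :
    ∃ X : CochainComplex (ModuleCat A) ℤ,
      Periodic2Z A X ∧ MinimalZ A X ∧
      (∀ i, Module.Free A (X.X i) ∧ Module.Finite A (X.X i)) ∧
      ∃ f : X ⟶ F, IsIso f := by
  obtain ⟨e⟩ := hiso
  have : ∀ i, Module.Finite A (F.X i) := fun i ↦ (hfree i).2
  have : ∀ i, Module.Finite A ((F⟦(-2 : ℤ)⟧).X i) := fun i ↦ (hfree _).2
  let eqv := HomotopyCategory.homotopyEquivOfIso e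
  have : IsIso eqv.hom :=
    eqv.isIso_hom_of_d_mem_smul_top (maximalIdeal_le_jacobson ⊥) (hmin.shift _) hmin
  let ψ : F ≅ F⟦(2 : ℤ)⟧ :=
    ((shiftFunctorCompIsoId _ (-2 : ℤ) 2 (by norm_num)).app F).symm ≪≫
      (shiftFunctor _ (2 : ℤ)).mapIso (asIso eqv.hom)
  let s : ∀ n, F.X n ≅ F.X (n + 2) := HomologicalComplex.Hom.isoApp ψ
  have hs (i j : ℤ) : (s i).hom ≫ F.d (i + 2) (j + 2) = F.d i j ≫ (s j).hom := by
    simpa [s, Int.negOnePow_even 2 even_two] using ψ.hom.comm i j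
  refine ⟨F.periodize s, fun n ↦ ⟨F.periodize_X_add_two s n, ?_⟩, hmin.transport _ _,
    fun i ↦ hfree (i % 2), (F.periodizeIso s).hom, inferInstance⟩
  rw [show n + 3 = n + 1 + 2 by ring]
  exact F.periodize_d_heq s hs n (n + 1)

/-- if `F` is a minimal complex of finitely generated free modules over a
Noetherian local ring which is isomorphic to its shift `F[-2]` in the homotopy category,
then `F` is isomorphic, as a complex, to a minimal 2-periodic complex of finitely
generated free modules. -/
theorem stmt_10 (A : Type) [CommRing A] [IsNoetherianRing A] [IsLocalRing A]
    (F : CochainComplex (ModuleCat A) ℤ)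
    (hfree : ∀ i, Module.Free A (F.X i) ∧ Module.Finite A (F.X i))
    (hmin : MinimalZ A F)
    (hiso : Nonempty
      (((HomotopyCategory.quotient (ModuleCat A) (ComplexShape.up ℤ)).obj (F⟦(-2 : ℤ)⟧)) ≅
        (HomotopyCategory.quotient (ModuleCat A) (ComplexShape.up ℤ)).obj F)) :
    ∃ X : CochainComplex (ModuleCat A) ℤ,
      Periodic2Z A X ∧ MinimalZ A X ∧
      (∀ i, Module.Free A (X.X i) ∧ Module.Finite A (X.X i)) ∧
      ∃ f : X ⟶ F, IsIso f :=
  stmt_10_general A F hfree hmin hiso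
end

section
/- Let A be a DVR with uniformizer x and K(1) the 2-periodic complex with all terms A, odd differentials multiplication by x, even differentials zero. Then every 2-periodic chain map f : K(1) → K(1) is, up to 2-periodic homotopy, either null-homotopic or an isomorphism; in particular End of K(1) in the 2-periodic homotopy category is a division ring and there are no irreducible maps from K(1) to itself. -/
/-!
An endomorphism of the free module `A` is multiplication by a scalar, and in the square from
degree `e` to degree `e + 1` the differential is multiplication by the non-zero-divisor `x`, so
a chain map `K(1) ⟶ K(1)` is multiplication by one scalar `r` in both degrees. If `r` is a unit
this is an isomorphism; otherwise `r = x * c` and multiplication by `c` from each degree to the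
other is a null-homotopy. So every endomorphism of `K(1)` in the homotopy category is `0` or a
unit, and neither can be irreducible: `0 = 0 ≫ 0` would force `0` to be a section or a
retraction, and a unit is a section.
-/

open CategoryTheory Limits IsLocalRing

/-- The complex shape of 2-periodic cochain complexes. -/
abbrev c2 : ComplexShape (ZMod 2) := ComplexShape.up (ZMod 2)

/-- `elem A e a` is the 2-periodic complex with all terms `A`, whose differential from
degree `e` to degree `e + 1` is multiplication by `a`, and whose other differential is `0`. -/
def elem (A : Type) [CommRing A] (e : ZMod 2) (a : A) :
    HomologicalComplex (ModuleCat A) c2 where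
  X _ := ModuleCat.of A A
  d i j := if i = e ∧ j = e + 1 then a • 𝟙 (ModuleCat.of A A) else 0
  shape i j h := by
    simp only [ComplexShape.up_Rel] at h
    rw [if_neg]; rintro ⟨rfl, rfl⟩; exact h rfl
  d_comp_d' i j k hij hjk := by
    simp only [ComplexShape.up_Rel] at hij hjk
    by_cases h : i = e ∧ j = e + 1
    · rw [if_neg (show ¬(j = e ∧ k = e + 1) by
        rintro ⟨rfl, -⟩; exact one_ne_zero (left_eq_add.mp h.2))]
      simp
    · rw [if_neg h]; simp

/-- A morphism in a category is irreducible if it is neither a section nor a retraction,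
and in any factorization `f = g ≫ h`, either `g` is a section or `h` is a retraction. -/
def IsIrreducibleHom {C : Type*} [Category C] {X Y : C} (f : X ⟶ Y) : Prop :=
  (¬ ∃ r : Y ⟶ X, f ≫ r = 𝟙 X) ∧ (¬ ∃ s : Y ⟶ X, s ≫ f = 𝟙 Y) ∧
    ∀ ⦃U : C⦄ (g : X ⟶ U) (h : U ⟶ Y), g ≫ h = f →
      (∃ r : U ⟶ X, g ≫ r = 𝟙 X) ∨ (∃ s : Y ⟶ U, s ≫ h = 𝟙 Y)

lemma ZMod.eq_zero_or_eq_one (i : ZMod 2) : i = 0 ∨ i = 1 := by revert i; decide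

lemma ModuleCat.exists_eq_smul_id {A : Type} [CommRing A]
    (φ : ModuleCat.of A A ⟶ ModuleCat.of A A) : ∃ r : A, φ = r • 𝟙 (ModuleCat.of A A) :=
  ⟨φ.hom 1, ModuleCat.hom_ext (LinearMap.ext_ring (by simp))⟩

lemma CategoryTheory.Linear.isIso_smul_id {R C : Type*} [CommRing R] [Category C]
    [Preadditive C] [Linear R C] (X : C) {r : R} (hr : IsUnit r) : IsIso (r • 𝟙 X) := by
  rw [← isUnit_iff_isIso (r • 𝟙 X : End X)]
  convert hr.map (algebraMap R (End X))
  rw [Algebra.algebraMap_eq_smul_one]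
  rfl

namespace IsIrreducibleHom

variable {C : Type*} [Category C]

lemma not_isIso {X Y : C} {f : X ⟶ Y} (hf : IsIrreducibleHom f) : ¬ IsIso f :=
  fun _ => hf.1 ⟨inv f, IsIso.hom_inv_id f⟩

lemma comp_self_ne {X : C} {f : X ⟶ X} (hf : IsIrreducibleHom f) : f ≫ f ≠ f :=
  fun h => (hf.2.2 f f h).elim hf.1 hf.2.1

end IsIrreducibleHom

lemma HomotopyCategory.eq_zero_or_isUnit_of_forall {ι V : Type*} [Category V] [Preadditive V]
    {c : ComplexShape ι} {K : HomologicalComplex V c}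
    (hK : ∀ f : K ⟶ K, Nonempty (Homotopy f 0) ∨ IsIso f)
    (g : End ((HomotopyCategory.quotient V c).obj K)) : g = 0 ∨ IsUnit g := by
  obtain ⟨f, rfl⟩ := (HomotopyCategory.quotient V c).map_surjective g
  rcases hK f with ⟨⟨H⟩⟩ | hf
  · exact .inl (by rw [HomotopyCategory.eq_of_homotopy f 0 H, Functor.map_zero])
  · exact .inr ((isUnit_iff_isIso _).2 inferInstance)

section Elem

variable {A : Type} [CommRing A]

lemma elem_d_self (e : ZMod 2) (a : A) : (elem A e a).d e (e + 1) = a • 𝟙 (ModuleCat.of A A) :=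
  if_pos ⟨rfl, rfl⟩

lemma elem_hom_exists_eq_smul_id {e : ZMod 2} {a : A} (ha : IsLeftRegular a)
    (f : elem A e a ⟶ elem A e a) : ∃ r : A, f = r • 𝟙 (elem A e a) := by
  obtain ⟨r, hr⟩ := ModuleCat.exists_eq_smul_id (f.f e)
  obtain ⟨s, hs⟩ := ModuleCat.exists_eq_smul_id (f.f (e + 1))
  have hrs : r = s := by
    have hsq := f.comm e (e + 1)
    rw [hr, hs, elem_d_self] at hsq
    have h1 : a * (r * 1) = s * (a * 1) := congr_arg (fun φ => φ.hom (1 : A)) hsq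
    exact ha (by simpa [mul_comm] using h1)
  refine ⟨r, ?_⟩
  ext i : 1
  obtain rfl | rfl : i = e ∨ i = e + 1 := by
    rcases ZMod.eq_zero_or_eq_one e with rfl | rfl <;>
      rcases ZMod.eq_zero_or_eq_one i with rfl | rfl <;> decide
  · exact hr
  · exact hrs ▸ hs

noncomputable def homotopyElemMulSmulId (e : ZMod 2) (a c : A) :
    Homotopy ((a * c) • 𝟙 (elem A e a)) 0 :=
  (Homotopy.ofEq (by
    ext k : 1
    have h2 : (1 + 1 : ZMod 2) = 0 := rfl
    have hk : c2.Rel (k + 1) k := by simp [add_assoc, h2]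
    refine Eq.trans ?_ (Homotopy.nullHomotopicMap'_f hk rfl _).symm
    rw [HomologicalComplex.smul_f_apply, HomologicalComplex.id_f]
    rcases ZMod.eq_zero_or_eq_one e with rfl | rfl <;>
      rcases ZMod.eq_zero_or_eq_one k with rfl | rfl
    all_goals simp [elem, h2, smul_smul, mul_comm]
    -- the leftover `+ 0` is taken in `(elem A e a).X k ⟶ _`, which `simp` does not unfold
    exacts [(add_zero _).symm, (zero_add _).symm, (zero_add _).symm, (add_zero _).symm])).trans
    (Homotopy.nullHomotopy' fun i j _ =>
      (c • 𝟙 (ModuleCat.of A A) : (elem A e a).X i ⟶ (elem A e a).X j))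

theorem elem_nonempty_homotopy_zero_or_isIso [IsDomain A] [IsDiscreteValuationRing A] {x : A}
    (hx : Irreducible x) (e : ZMod 2) (f : elem A e x ⟶ elem A e x) :
    Nonempty (Homotopy f 0) ∨ IsIso f := by
  obtain ⟨r, rfl⟩ := elem_hom_exists_eq_smul_id (IsRegular.of_ne_zero hx.ne_zero).left f
  by_cases hr : IsUnit r
  · exact .inr (Linear.isIso_smul_id _ hr)
  · have hxr : x ∣ r := by
      rw [← Ideal.mem_span_singleton, ← hx.maximalIdeal_eq]
      exact hr
    obtain ⟨c, rfl⟩ := hxr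
    exact .inl ⟨homotopyElemMulSmulId e x c⟩

end Elem

/-- over a DVR with uniformizer `x`, every 2-periodic endomorphism of
`K(1)` is either 2-periodically null-homotopic or an isomorphism; consequently the
endomorphism ring of `K(1)` in `K²(proj A)` is a division ring, and there is no
irreducible map from `K(1)` to itself in `K²(proj A)`. -/
theorem stmt_17 (A : Type) [CommRing A] [IsDomain A] [IsDiscreteValuationRing A]
    (x : A) (hx : Irreducible x) :
    (∀ f : elem A 1 x ⟶ elem A 1 x, Nonempty (Homotopy f 0) ∨ IsIso f) ∧
    (∀ g : End ((HomotopyCategory.quotient (ModuleCat A) c2).obj (elem A 1 x)),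
      g = 0 ∨ IsUnit g) ∧
    ¬ ∃ f : (HomotopyCategory.quotient (ModuleCat A) c2).obj (elem A 1 x) ⟶
        (HomotopyCategory.quotient (ModuleCat A) c2).obj (elem A 1 x),
      IsIrreducibleHom f := by
  have hK := elem_nonempty_homotopy_zero_or_isIso hx 1
  have hEnd := HomotopyCategory.eq_zero_or_isUnit_of_forall hK
  refine ⟨hK, hEnd, ?_⟩
  rintro ⟨f, hf⟩
  rcases hEnd f with rfl | hu
  · exact hf.comp_self_ne zero_comp
  · exact hf.not_isIso ((isUnit_iff_isIso f).1 hu)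
end
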